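/- Corollary 2.1(c) (band-limited window). Fix t ∈ ℝ. Suppose x ∈ 𝓑_{ε1,ε2}, supp(ĝ) ⊆ [−α, α], the separation condition σ(t) ≥ 2α/(φ'_k(t) − φ'_{k−1}(t)) holds for all t and k = 1,…,K, and 2M(t)λ_0(t) ≤ μ(t). Let ε̃1 satisfy M(t)λ_0(t) ≤ ε̃1 ≤ μ(t) − M(t)λ_0(t); let η̂_0 = 0 and η̂_ℓ(t) = argmax_{η ∈ 𝓖_{t,ℓ}} |Ṽ_x(t,η)| for 1 ≤ ℓ ≤ K. Then for each ℓ = 0,1,…,K, |Ṽ_x(t, η̂_ℓ) − x_ℓ(t)| ≤ M(t)λ_0(t) + 2π I_1 A_ℓ(t) · |ĝ|^{−1}(1 − 2 M(t)λ_0(t)/A_ℓ(t)). -/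

import Mathlib

/-! Near `t` every component is close to a pure tone: the Lipschitz bound on `A_k` and the
second-order Taylor remainder of `φ_k` put `Ṽ_x(t, η)` within `M(t) λ₀(t)` of
`Σ_k x_k(t) ĝ(σ(t) (η - φ'_k(t)))`. On the band `|η - φ'_ℓ(t)| < α / σ(t)` the separation
condition and `supp ĝ ⊆ [-α, α]` kill every term but the `ℓ`-th. Comparing the maximiser `η̂_ℓ`
with `η = φ'_ℓ(t)` gives `|ĝ(D)| ≥ 1 - 2 M λ₀ / A_ℓ` for `D = σ(t) (η̂_ℓ - φ'_ℓ(t))`, hence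
`|D| ≤ |ĝ|⁻¹(1 - 2 M λ₀ / A_ℓ)`, and `ĝ` is `2π I₁`-Lipschitz with `ĝ(0) = 1`. -/

open MeasureTheory Real

noncomputable section

/-- The adaptive short-time Fourier transform with time-varying window width `σ`. -/
def aSTFT (x : ℝ → ℂ) (g : ℝ → ℝ) (σ : ℝ → ℝ) (t η : ℝ) : ℂ :=
  ∫ τ : ℝ, x (t + τ) * (((σ t)⁻¹ * g (τ / σ t) : ℝ) : ℂ) *
    Complex.exp (-(2 * (π : ℂ) * η * τ) * Complex.I)

/-- The Fourier transform `ĝ` of the window `g`. -/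
def hatg (g : ℝ → ℝ) (ξ : ℝ) : ℂ :=
  ∫ τ : ℝ, (g τ : ℂ) * Complex.exp (-(2 * (π : ℂ) * ξ * τ) * Complex.I)

/-- The absolute moments `I_n = ∫ |τ^n g(τ)| dτ` of the window. -/
def momentI (g : ℝ → ℝ) (n : ℕ) : ℝ := ∫ τ : ℝ, |τ| ^ n * |g τ|

/-- The `k`-th component `x_k(s) = A_k(s) e^{2πi φ_k(s)}`. -/
def xcomp (A φ : ℕ → ℝ → ℝ) (k : ℕ) (s : ℝ) : ℂ :=
  (A k s : ℂ) * Complex.exp ((2 * (π : ℂ) * φ k s) * Complex.I)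

/-- `M(t) = Σ_{k=0}^K A_k(t)`. -/
def Msum (K : ℕ) (A : ℕ → ℝ → ℝ) (t : ℝ) : ℝ := ∑ k ∈ Finset.range (K + 1), A k t

/-- `μ(t) = min_{0 ≤ k ≤ K} A_k(t)`. -/
def muMin (K : ℕ) (A : ℕ → ℝ → ℝ) (t : ℝ) : ℝ :=
  (Finset.range (K + 1)).inf' (by simp) fun k => A k t

/-- `λ_0(t) = ε1 I_1 σ(t) + π ε2 I_2 σ(t)²`. -/
def lam0 (g : ℝ → ℝ) (σ : ℝ → ℝ) (ε1 ε2 t : ℝ) : ℝ :=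
  ε1 * momentI g 1 * σ t + π * ε2 * momentI g 2 * σ t ^ 2

/-- `err_ℓ(t) = M(t)λ_0(t) + Σ_{k≠ℓ} A_k(t) |ĝ(α(2|ℓ−k|−1))|`. -/
def errl (K : ℕ) (A : ℕ → ℝ → ℝ) (g : ℝ → ℝ) (σ : ℝ → ℝ) (α ε1 ε2 : ℝ)
    (l : ℕ) (t : ℝ) : ℝ :=
  Msum K A t * lam0 g σ ε1 ε2 t +
    ∑ k ∈ (Finset.range (K + 1)).erase l,
      A k t * ‖hatg g (α * (2 * |(l : ℝ) - (k : ℝ)| - 1))‖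

/-- `𝓖_t = {η : |Ṽ_x(t,η)| > ε̃1}`. -/
def Gt (x : ℝ → ℂ) (g : ℝ → ℝ) (σ : ℝ → ℝ) (t eps : ℝ) : Set ℝ :=
  {η | eps < ‖aSTFT x g σ t η‖}

/-- `𝓖_{t,k} = {η ∈ 𝓖_t : |η − φ'_k(t)| < α/σ(t)}`. -/
def Gtk (x : ℝ → ℂ) (g : ℝ → ℝ) (σ : ℝ → ℝ) (φ : ℕ → ℝ → ℝ) (α t eps : ℝ)
    (k : ℕ) : Set ℝ :=
  {η | η ∈ Gt x g σ t eps ∧ |η - deriv (φ k) t| < α / σ t}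

open scoped FourierTransform

open Complex in
lemma norm_exp_ofReal_mul_I_sub_exp_ofReal_mul_I_le (a b : ℝ) :
    ‖exp (a * I) - exp (b * I)‖ ≤ |a - b| := by
  have h : exp (a * I) - exp (b * I) = exp (b * I) * (exp (I * ↑(a - b)) - 1) := by
    rw [mul_sub, ← Complex.exp_add]
    push_cast
    ring_nf
  rw [h, norm_mul, norm_exp_ofReal_mul_I, one_mul, ← Real.norm_eq_abs]
  exact Real.norm_exp_I_mul_ofReal_sub_one_le

lemma abs_sub_sub_deriv_mul_le {f : ℝ → ℝ} {c : ℝ} (hf : ContDiff ℝ 2 f)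
    (hc : ∀ s, |deriv (deriv f) s| ≤ c) (t τ : ℝ) :
    |f (t + τ) - f t - deriv f t * τ| ≤ c * τ ^ 2 / 2 := by
  rcases eq_or_ne τ 0 with rfl | hτ
  · simp
  have hne : t ≠ t + τ := by simpa [eq_comm] using hτ
  obtain ⟨s, -, hs⟩ := taylor_mean_remainder_lagrange_iteratedDeriv (n := 1) hne hf.contDiffOn
  have hderiv : derivWithin f (Set.uIcc t (t + τ)) t = deriv f t :=
    (hf.differentiable (by norm_num) t).derivWithin (uniqueDiffOn_uIcc hne t Set.left_mem_uIcc)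
  rw [taylorWithinEval_succ, taylor_within_zero_eval, iteratedDerivWithin_one, hderiv,
    iteratedDeriv_succ, iteratedDeriv_one] at hs
  have hlagrange : f (t + τ) - f t - deriv f t * τ = deriv (deriv f) s * τ ^ 2 / 2 := by
    norm_num [Nat.factorial] at hs
    linarith
  rw [hlagrange, abs_div, abs_mul, abs_of_nonneg (sq_nonneg τ), abs_two]
  gcongr
  exact hc s

lemma momentI_nonneg (g : ℝ → ℝ) (n : ℕ) : 0 ≤ momentI g n :=
  integral_nonneg fun τ ↦ by positivity

section Window

variable {g : ℝ → ℝ}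

lemma hatg_eq_fourier (g : ℝ → ℝ) : hatg g = 𝓕 (fun τ ↦ (g τ : ℂ)) := by
  ext ξ
  rw [Real.fourier_real_eq_integral_exp_smul, hatg]
  congr 1
  ext τ
  rw [smul_eq_mul, mul_comm]
  push_cast
  ring_nf

lemma hatg_zero (hg : ∫ τ, g τ = 1) : hatg g 0 = 1 := by
  have h : ∫ τ, (g τ : ℂ) = 1 := by rw [integral_complex_ofReal, hg, Complex.ofReal_one]
  simpa [hatg] using h

lemma hasDerivAt_hatg (hg : Integrable g) (hg₁ : Integrable fun τ ↦ τ * g τ) (ξ : ℝ) :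
    HasDerivAt (hatg g) (𝓕 (fun τ : ℝ ↦ (-2 * π * Complex.I * τ) • (g τ : ℂ)) ξ) ξ := by
  rw [hatg_eq_fourier]
  exact Real.hasDerivAt_fourier hg.ofReal (by simpa using hg₁.ofReal (𝕜 := ℂ)) ξ

lemma continuous_hatg (hg : Integrable g) (hg₁ : Integrable fun τ ↦ τ * g τ) :
    Continuous (hatg g) :=
  continuous_iff_continuousAt.2 fun ξ ↦ (hasDerivAt_hatg hg hg₁ ξ).continuousAt

lemma norm_hatg_sub_le (hg : Integrable g) (hg₁ : Integrable fun τ ↦ τ * g τ) (ξ₁ ξ₂ : ℝ) :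
    ‖hatg g ξ₁ - hatg g ξ₂‖ ≤ 2 * π * momentI g 1 * |ξ₁ - ξ₂| := by
  have hbound : ∀ ξ, ‖𝓕 (fun τ : ℝ ↦ (-2 * π * Complex.I * τ) • (g τ : ℂ)) ξ‖ ≤
      2 * π * momentI g 1 := by
    intro ξ
    refine (VectorFourier.norm_fourierIntegral_le_integral_norm _ _ _ _ _).trans_eq ?_
    rw [momentI, ← integral_const_mul]
    congr 1
    ext τ
    simp [abs_of_pos pi_pos]
    ring
  rw [← Real.norm_eq_abs]
  exact Convex.norm_image_sub_le_of_norm_hasDerivWithin_le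
    (fun ξ _ ↦ (hasDerivAt_hatg hg hg₁ ξ).hasDerivWithinAt) (fun ξ _ ↦ hbound ξ) convex_univ
    (Set.mem_univ _) (Set.mem_univ _)

variable {β : ℝ}

lemma hatg_eq_zero_of_le (hcont : Continuous (hatg g))
    (hsupp : ∀ ξ, β < |ξ| → hatg g ξ = 0) {ξ : ℝ} (hξ : β ≤ ξ) : hatg g ξ = 0 := by
  have hclosed : IsClosed {ξ | hatg g ξ = 0} := isClosed_eq hcont continuous_const
  have hIoi : Set.Ioi β ⊆ {ξ | hatg g ξ = 0} := fun ξ hξ ↦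
    hsupp ξ (hξ.out.trans_le (le_abs_self ξ))
  exact hclosed.closure_subset_iff.2 hIoi (by rwa [closure_Ioi])

lemma norm_hatg_sub_one_le (hg : Integrable g) (hg₁ : Integrable fun τ ↦ τ * g τ)
    (hg_int : ∫ τ, g τ = 1) (hβ : 0 ≤ β) (hsupp : ∀ ξ, β < |ξ| → hatg g ξ = 0) (D : ℝ) :
    ‖hatg g D - 1‖ ≤ 2 * π * momentI g 1 * min |D| β := by
  rw [← hatg_zero hg_int]
  rcases le_or_gt |D| β with hD | hD
  · simpa [min_eq_left hD] using norm_hatg_sub_le hg hg₁ D 0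
  · rw [min_eq_right hD.le, hsupp D hD,
      ← hatg_eq_zero_of_le (continuous_hatg hg hg₁) hsupp le_rfl]
    simpa [abs_of_nonneg hβ] using norm_hatg_sub_le hg hg₁ β 0

/-- `ginv` is only known to be a left inverse of `|ĝ|` on `[0, β]`; the intermediate value theorem
supplies a point of `[min |D| β, β]` at which `|ĝ|` takes the value `v`. -/
lemma min_abs_le_of_le_norm_hatg (hcont : Continuous (hatg g)) (hβ : 0 ≤ β)
    (hsupp : ∀ ξ, β < |ξ| → hatg g ξ = 0) (heven : ∀ ξ, ‖hatg g (-ξ)‖ = ‖hatg g ξ‖)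
    {ginv : ℝ → ℝ} (hginv : ∀ ξ, 0 ≤ ξ → ξ ≤ β → ginv ‖hatg g ξ‖ = ξ)
    {v D : ℝ} (hv : 0 ≤ v) (hD : v ≤ ‖hatg g D‖) : min |D| β ≤ ginv v := by
  have hvmin : v ≤ ‖hatg g (min |D| β)‖ := by
    rcases le_or_gt |D| β with hDβ | hDβ
    · rw [min_eq_left hDβ]
      rcases abs_choice D with h | h
      · rwa [h]
      · rwa [h, heven]
    · rw [hsupp D hDβ, norm_zero] at hD
      exact hD.trans (norm_nonneg _)
  have hvβ : ‖hatg g β‖ ≤ v := by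
    rw [hatg_eq_zero_of_le hcont hsupp le_rfl, norm_zero]
    exact hv
  obtain ⟨ξ, hξ, rfl⟩ := intermediate_value_Icc' (min_le_right _ _)
    hcont.norm.continuousOn ⟨hvβ, hvmin⟩
  rw [hginv ξ ((le_min (abs_nonneg D) hβ).trans hξ.1) hξ.2]
  exact hξ.1

lemma norm_sub_le_of_le_mul_norm_hatg (hg : Integrable g) (hg₁ : Integrable fun τ ↦ τ * g τ)
    (hg_int : ∫ τ, g τ = 1) (hβ : 0 ≤ β) (hsupp : ∀ ξ, β < |ξ| → hatg g ξ = 0)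
    (heven : ∀ ξ, ‖hatg g (-ξ)‖ = ‖hatg g ξ‖)
    {ginv : ℝ → ℝ} (hginv : ∀ ξ, 0 ≤ ξ → ξ ≤ β → ginv ‖hatg g ξ‖ = ξ)
    {V z : ℂ} {D E : ℝ} (hz : 0 < ‖z‖) (hE : 2 * E ≤ ‖z‖) (hV : ‖V - z * hatg g D‖ ≤ E)
    (hridge : ‖z‖ - 2 * E ≤ ‖z‖ * ‖hatg g D‖) :
    ‖V - z‖ ≤ E + 2 * π * momentI g 1 * ‖z‖ * ginv (1 - 2 * E / ‖z‖) := by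
  set v := 1 - 2 * E / ‖z‖
  have hv₀ : 0 ≤ v := sub_nonneg.2 ((div_le_one hz).2 hE)
  have hvD : v ≤ ‖hatg g D‖ := by
    rw [show v = (‖z‖ - 2 * E) / ‖z‖ by simp only [v]; field_simp]
    exact (div_le_iff₀ hz).2 (by linarith)
  have hD : ‖hatg g D - 1‖ ≤ 2 * π * momentI g 1 * ginv v :=
    (norm_hatg_sub_one_le hg hg₁ hg_int hβ hsupp D).trans <|
      mul_le_mul_of_nonneg_left (min_abs_le_of_le_norm_hatg (continuous_hatg hg hg₁) hβ
        hsupp heven hginv hv₀ hvD) (by positivity [momentI_nonneg g 1])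
  calc ‖V - z‖ ≤ ‖V - z * hatg g D‖ + ‖z * hatg g D - z‖ := norm_sub_le_norm_sub_add_norm_sub _ _ _
    _ ≤ E + ‖z‖ * (2 * π * momentI g 1 * ginv v) := by
      rw [← mul_sub_one, norm_mul]
      gcongr
    _ = E + 2 * π * momentI g 1 * ‖z‖ * ginv v := by ring

end Window

section Dilation

variable {g : ℝ → ℝ} {a : ℝ}

lemma integral_dilate_mul_exp (ha : 0 < a) (ω : ℝ) :
    ∫ τ : ℝ, ((a⁻¹ * g (τ / a) : ℝ) : ℂ) * Complex.exp (-(2 * (π : ℂ) * ω * τ) * Complex.I) =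
      hatg g (a * ω) := by
  set G : ℝ → ℂ := fun u ↦ (g u : ℂ) * Complex.exp (-(2 * (π : ℂ) * ↑(a * ω) * u) * Complex.I)
  have hG : ∀ τ : ℝ, ((a⁻¹ * g (τ / a) : ℝ) : ℂ) *
      Complex.exp (-(2 * (π : ℂ) * ω * τ) * Complex.I) = (a⁻¹ : ℂ) * G (τ / a) := by
    intro τ
    have : (a : ℂ) ≠ 0 := by exact_mod_cast ha.ne'
    simp only [G]
    push_cast
    field_simp
  simp_rw [hG]
  rw [integral_const_mul, Measure.integral_comp_div G a, abs_of_pos ha, Complex.real_smul,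
    ← mul_assoc, inv_mul_cancel₀ (by exact_mod_cast ha.ne'), one_mul]
  rfl

lemma abs_pow_mul_dilate_eq (ha : 0 < a) (n : ℕ) (τ : ℝ) :
    |τ| ^ n * (a⁻¹ * |g (τ / a)|) = a⁻¹ * a ^ n * (|τ / a| ^ n * |g (τ / a)|) := by
  rw [abs_div, abs_of_pos ha, div_pow]
  field_simp

lemma integrable_abs_pow_mul_dilate {n : ℕ} (hg : Integrable fun u ↦ |u| ^ n * |g u|)
    (ha : 0 < a) : Integrable fun τ ↦ |τ| ^ n * (a⁻¹ * |g (τ / a)|) := by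
  simp_rw [abs_pow_mul_dilate_eq ha]
  exact (hg.comp_div ha.ne').const_mul _

lemma integral_abs_pow_mul_dilate (ha : 0 < a) (n : ℕ) :
    ∫ τ, |τ| ^ n * (a⁻¹ * |g (τ / a)|) = a ^ n * momentI g n := by
  simp_rw [abs_pow_mul_dilate_eq ha]
  rw [integral_const_mul, Measure.integral_comp_div (fun u ↦ |u| ^ n * |g u|), momentI,
    abs_of_pos ha, smul_eq_mul]
  field_simp

end Dilation

section STFT

variable {g σ : ℝ → ℝ} {t : ℝ}

lemma norm_exp_neg_two_pi_mul_I (η τ : ℝ) :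
    ‖Complex.exp (-(2 * (π : ℂ) * η * τ) * Complex.I)‖ = 1 := by
  simp [Complex.norm_exp]

lemma integrable_aSTFT_integrand {f : ℝ → ℂ} {C : ℝ} (hf : Continuous f) (hfC : ∀ s, ‖f s‖ ≤ C)
    (hg : Integrable g) (hσ : 0 < σ t) (η : ℝ) :
    Integrable fun τ ↦ f (t + τ) * (((σ t)⁻¹ * g (τ / σ t) : ℝ) : ℂ) *
      Complex.exp (-(2 * (π : ℂ) * η * τ) * Complex.I) := by
  have hw : Integrable fun τ ↦ (((σ t)⁻¹ * g (τ / σ t) : ℝ) : ℂ) :=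
    ((hg.comp_div hσ.ne').const_mul _).ofReal
  exact (hw.bdd_mul (hf.comp (continuous_const_add t)).aestronglyMeasurable
    (.of_forall fun τ ↦ hfC _)).mul_bdd (by fun_prop)
    (.of_forall fun τ ↦ (norm_exp_neg_two_pi_mul_I η τ).le)

lemma aSTFT_finset_sum {ι : Type*} (s : Finset ι) {f : ι → ℝ → ℂ}
    (hf : ∀ i ∈ s, Continuous (f i)) (hfC : ∀ i ∈ s, ∃ C, ∀ u, ‖f i u‖ ≤ C)
    (hg : Integrable g) (hσ : 0 < σ t) (η : ℝ) :
    aSTFT (fun u ↦ ∑ i ∈ s, f i u) g σ t η = ∑ i ∈ s, aSTFT (f i) g σ t η := by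
  simp only [aSTFT]
  rw [← integral_finsetSum s fun i hi ↦
    (hfC i hi).elim fun C hC ↦ integrable_aSTFT_integrand (hf i hi) hC hg hσ η]
  simp only [Finset.sum_mul]

lemma aSTFT_tone (hσ : 0 < σ t) (c : ℂ) (ω η : ℝ) :
    aSTFT (fun u ↦ c * Complex.exp (↑(2 * π * ω * (u - t)) * Complex.I)) g σ t η =
      c * hatg g (σ t * (η - ω)) := by
  rw [aSTFT, ← integral_dilate_mul_exp hσ, ← integral_const_mul]
  congr 1
  ext τ
  rw [add_sub_cancel_left, mul_comm (c * _), mul_assoc, mul_assoc, ← Complex.exp_add]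
  push_cast
  ring_nf

lemma norm_aSTFT_sub_aSTFT_le {f h : ℝ → ℂ} {C₁ C₂ b₁ b₂ : ℝ}
    (hf : Continuous f) (hfC : ∀ s, ‖f s‖ ≤ C₁) (hh : Continuous h) (hhC : ∀ s, ‖h s‖ ≤ C₂)
    (hg : Integrable g) (hg₁ : Integrable fun u ↦ |u| ^ 1 * |g u|)
    (hg₂ : Integrable fun u ↦ |u| ^ 2 * |g u|) (hσ : 0 < σ t)
    (hfh : ∀ τ, ‖f (t + τ) - h (t + τ)‖ ≤ b₁ * |τ| + b₂ * τ ^ 2) (η : ℝ) :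
    ‖aSTFT f g σ t η - aSTFT h g σ t η‖ ≤
      b₁ * σ t * momentI g 1 + b₂ * σ t ^ 2 * momentI g 2 := by
  have hm₁ := integrable_abs_pow_mul_dilate hg₁ hσ
  have hm₂ := integrable_abs_pow_mul_dilate hg₂ hσ
  have hbound : Integrable fun τ ↦ b₁ * (|τ| ^ 1 * ((σ t)⁻¹ * |g (τ / σ t)|)) +
      b₂ * (|τ| ^ 2 * ((σ t)⁻¹ * |g (τ / σ t)|)) :=
    (hm₁.const_mul b₁).add (hm₂.const_mul b₂)
  rw [aSTFT, aSTFT, ← integral_sub (integrable_aSTFT_integrand hf hfC hg hσ η)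
    (integrable_aSTFT_integrand hh hhC hg hσ η)]
  refine (norm_integral_le_of_norm_le hbound (.of_forall fun τ ↦ ?_)).trans_eq ?_
  · rw [← sub_mul, ← sub_mul, norm_mul, norm_mul, norm_exp_neg_two_pi_mul_I, mul_one,
      Complex.norm_real, Real.norm_eq_abs, abs_mul, abs_inv, abs_of_pos hσ]
    calc ‖f (t + τ) - h (t + τ)‖ * ((σ t)⁻¹ * |g (τ / σ t)|)
        ≤ (b₁ * |τ| + b₂ * τ ^ 2) * ((σ t)⁻¹ * |g (τ / σ t)|) := by gcongr; exact hfh τ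
      _ = _ := by rw [pow_one, ← sq_abs τ]; ring
  · rw [integral_add (hm₁.const_mul b₁) (hm₂.const_mul b₂), integral_const_mul,
      integral_const_mul, integral_abs_pow_mul_dilate hσ, integral_abs_pow_mul_dilate hσ]
    ring

end STFT

section Components

variable {A φ : ℕ → ℝ → ℝ} {k : ℕ}

lemma xcomp_eq (A φ : ℕ → ℝ → ℝ) (k : ℕ) (s : ℝ) :
    xcomp A φ k s = A k s * Complex.exp (↑(2 * π * φ k s) * Complex.I) := by
  rw [xcomp]
  push_cast
  rfl

lemma norm_xcomp (A φ : ℕ → ℝ → ℝ) (k : ℕ) (s : ℝ) : ‖xcomp A φ k s‖ = |A k s| := by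
  rw [xcomp_eq, norm_mul, Complex.norm_exp_ofReal_mul_I, mul_one, Complex.norm_real,
    Real.norm_eq_abs]

lemma continuous_xcomp (hA : Continuous (A k)) (hφ : Continuous (φ k)) :
    Continuous (xcomp A φ k) := by
  unfold xcomp
  fun_prop

lemma norm_xcomp_add_sub_tone_le {ε₁ ε₂ t τ : ℝ} (hA : 0 ≤ A k t)
    (hA_lip : |A k (t + τ) - A k t| ≤ ε₁ * |τ| * A k t)
    (hφ : |φ k (t + τ) - φ k t - deriv (φ k) t * τ| ≤ ε₂ * τ ^ 2 / 2) :
    ‖xcomp A φ k (t + τ) - xcomp A φ k t * Complex.exp (↑(2 * π * deriv (φ k) t * τ) * Complex.I)‖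
      ≤ A k t * ε₁ * |τ| + A k t * π * ε₂ * τ ^ 2 := by
  set e : ℝ → ℂ := fun u ↦ Complex.exp (↑(2 * π * u) * Complex.I)
  have hsplit : xcomp A φ k (t + τ) - xcomp A φ k t *
      Complex.exp (↑(2 * π * deriv (φ k) t * τ) * Complex.I) =
      ↑(A k (t + τ) - A k t) * e (φ k (t + τ)) +
        A k t * (e (φ k (t + τ)) - e (φ k t + deriv (φ k) t * τ)) := by
    simp only [xcomp_eq, e]
    push_cast
    simp only [mul_add, add_mul, Complex.exp_add]
    ring_nf
  have hphase : ‖e (φ k (t + τ)) - e (φ k t + deriv (φ k) t * τ)‖ ≤ π * ε₂ * τ ^ 2 := by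
    refine (norm_exp_ofReal_mul_I_sub_exp_ofReal_mul_I_le _ _).trans ?_
    rw [← mul_sub, abs_mul, abs_of_pos (by positivity), ← sub_sub]
    nlinarith [pi_pos]
  rw [hsplit]
  refine (norm_add_le _ _).trans ?_
  rw [norm_mul, norm_mul, Complex.norm_real, Complex.norm_real, Real.norm_eq_abs,
    Real.norm_eq_abs, abs_of_nonneg hA, Complex.norm_exp_ofReal_mul_I, mul_one]
  nlinarith [mul_le_mul_of_nonneg_left hphase hA]

end Components

section Approximation

variable {A φ : ℕ → ℝ → ℝ} {g σ : ℝ → ℝ} {ε₁ ε₂ t : ℝ}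

lemma norm_aSTFT_xcomp_sub_le {k : ℕ} {C : ℝ} (hA : Continuous (A k)) (hAC : ∀ s, |A k s| ≤ C)
    (hφ : ContDiff ℝ 2 (φ k)) (hA_nonneg : 0 ≤ A k t)
    (hA_lip : ∀ τ, |A k (t + τ) - A k t| ≤ ε₁ * |τ| * A k t)
    (hφ'' : ∀ s, |deriv (deriv (φ k)) s| ≤ ε₂)
    (hg : Integrable g) (hg₁ : Integrable fun u ↦ |u| ^ 1 * |g u|)
    (hg₂ : Integrable fun u ↦ |u| ^ 2 * |g u|) (hσ : 0 < σ t) (η : ℝ) :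
    ‖aSTFT (xcomp A φ k) g σ t η - xcomp A φ k t * hatg g (σ t * (η - deriv (φ k) t))‖ ≤
      A k t * lam0 g σ ε₁ ε₂ t := by
  rw [← aSTFT_tone hσ]
  refine (norm_aSTFT_sub_aSTFT_le (b₁ := A k t * ε₁) (b₂ := A k t * π * ε₂)
    (continuous_xcomp hA hφ.continuous)
    (fun s ↦ (norm_xcomp A φ k s).trans_le (hAC s)) (by fun_prop)
    (fun s ↦ by rw [norm_mul, Complex.norm_exp_ofReal_mul_I, mul_one]) hg hg₁ hg₂ hσ
    (fun τ ↦ ?_) η).trans_eq ?_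
  · simpa only [add_sub_cancel_left, mul_assoc] using
      norm_xcomp_add_sub_tone_le hA_nonneg (hA_lip τ) (abs_sub_sub_deriv_mul_le hφ hφ'' t τ)
  · rw [lam0]
    ring

theorem norm_aSTFT_sub_sum_le {K : ℕ} {x : ℝ → ℂ}
    (hA : ∀ k ≤ K, Continuous (A k)) (hAC : ∀ k ≤ K, ∃ C, ∀ s, |A k s| ≤ C)
    (hφ : ∀ k ≤ K, ContDiff ℝ 2 (φ k)) (hA_nonneg : ∀ k ≤ K, 0 ≤ A k t)
    (hA_lip : ∀ k ≤ K, ∀ τ, |A k (t + τ) - A k t| ≤ ε₁ * |τ| * A k t)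
    (hφ'' : ∀ k ≤ K, ∀ s, |deriv (deriv (φ k)) s| ≤ ε₂)
    (hx : ∀ s, x s = ∑ k ∈ Finset.range (K + 1), xcomp A φ k s)
    (hg : Integrable g) (hg₁ : Integrable fun u ↦ |u| ^ 1 * |g u|)
    (hg₂ : Integrable fun u ↦ |u| ^ 2 * |g u|) (hσ : 0 < σ t) (η : ℝ) :
    ‖aSTFT x g σ t η - ∑ k ∈ Finset.range (K + 1),
        xcomp A φ k t * hatg g (σ t * (η - deriv (φ k) t))‖ ≤
      Msum K A t * lam0 g σ ε₁ ε₂ t := by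
  have hK : ∀ k ∈ Finset.range (K + 1), k ≤ K :=
    fun k hk ↦ Nat.lt_succ_iff.1 (Finset.mem_range.1 hk)
  rw [show x = fun s ↦ ∑ k ∈ Finset.range (K + 1), xcomp A φ k s from funext hx,
    aSTFT_finset_sum _ (fun k hk ↦ continuous_xcomp (hA k (hK k hk)) (hφ k (hK k hk)).continuous)
      (fun k hk ↦ (hAC k (hK k hk)).imp fun C hC s ↦ (norm_xcomp A φ k s).trans_le (hC s)) hg hσ η,
    ← Finset.sum_sub_distrib, Msum, Finset.sum_mul]
  refine (norm_sum_le _ _).trans (Finset.sum_le_sum fun k hk ↦ ?_)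
  obtain ⟨C, hC⟩ := hAC k (hK k hk)
  exact norm_aSTFT_xcomp_sub_le (hA k (hK k hk)) hC (hφ k (hK k hk)) (hA_nonneg k (hK k hk))
    (hA_lip k (hK k hk)) (hφ'' k (hK k hk)) hg hg₁ hg₂ hσ η

end Approximation

section Separation

lemma le_sub_of_le_sub_pred {f : ℕ → ℝ} {d : ℝ} {K : ℕ} (hd : 0 ≤ d)
    (h : ∀ k, 1 ≤ k → k ≤ K → d ≤ f k - f (k - 1)) {j k : ℕ} (hjk : j < k) (hk : k ≤ K) :
    d ≤ f k - f j := by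
  induction k, hjk using Nat.le_induction with
  | base => simpa using h (j + 1) (by omega) hk
  | succ k hjk ih =>
    have hstep := h (k + 1) (by omega) hk
    rw [Nat.add_sub_cancel] at hstep
    linarith [ih (by omega)]

lemma le_abs_sub_of_le_sub_pred {f : ℕ → ℝ} {d : ℝ} {K : ℕ} (hd : 0 ≤ d)
    (h : ∀ k, 1 ≤ k → k ≤ K → d ≤ f k - f (k - 1)) {j k : ℕ} (hj : j ≤ K) (hk : k ≤ K)
    (hjk : j ≠ k) : d ≤ |f k - f j| := by
  rcases hjk.lt_or_gt with hlt | hlt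
  · exact (le_sub_of_le_sub_pred hd h hlt hk).trans (le_abs_self _)
  · rw [abs_sub_comm]
    exact (le_sub_of_le_sub_pred hd h hlt hj).trans (le_abs_self _)

lemma hatg_mul_sub_eq_zero_of_separated {g : ℝ → ℝ} {α a ω ω' η : ℝ}
    (hsupp : ∀ ξ, α < |ξ| → hatg g ξ = 0) (ha : 0 < a) (hgap : 2 * α / a ≤ |ω' - ω|)
    (hη : |η - ω| < α / a) : hatg g (a * (η - ω')) = 0 := by
  refine hsupp _ ?_
  rw [abs_mul, abs_of_pos ha, ← div_lt_iff₀' ha]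
  calc α / a = 2 * α / a - α / a := by ring
    _ < |ω' - ω| - |η - ω| := by linarith
    _ ≤ |η - ω'| := by linarith [abs_sub_le ω' η ω, abs_sub_comm ω' η]

lemma norm_sub_mul_hatg_le_of_separated {g : ℝ → ℝ} {K m : ℕ} (hm : m ≤ K) {F : ℕ → ℂ}
    {ω : ℕ → ℝ} {V : ℂ} {E α a η : ℝ}
    (happrox : ‖V - ∑ k ∈ Finset.range (K + 1), F k * hatg g (a * (η - ω k))‖ ≤ E)
    (hsupp : ∀ ξ, α < |ξ| → hatg g ξ = 0) (ha : 0 < a)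
    (hgap : ∀ j ≤ K, ∀ k ≤ K, j ≠ k → 2 * α / a ≤ |ω k - ω j|) (hη : |η - ω m| < α / a) :
    ‖V - F m * hatg g (a * (η - ω m))‖ ≤ E := by
  rwa [Finset.sum_eq_single_of_mem m (Finset.mem_range.2 (Nat.lt_succ_of_le hm))
    fun k hk hkm ↦ by
      rw [hatg_mul_sub_eq_zero_of_separated hsupp ha
        (hgap m hm k (Nat.lt_succ_iff.1 (Finset.mem_range.1 hk)) (Ne.symm hkm)) hη, mul_zero]]
    at happrox

end Separation

lemma two_mul_div_le_deriv_sub_deriv_pred {K : ℕ} {φ : ℕ → ℝ → ℝ} {α a t : ℝ} (ha : 0 < a)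
    (hφ₀ : ∀ s, deriv (φ 0) s = 0) (hφ'_pos : ∀ k, 1 ≤ k → k ≤ K → ∃ c > 0, ∀ s, c ≤ deriv (φ k) s)
    (hfreq : ∃ d > 0, ∀ k, 2 ≤ k → k ≤ K → ∀ s, d ≤ deriv (φ k) s - deriv (φ (k - 1)) s)
    (hsep : ∀ k, 1 ≤ k → k ≤ K → 2 * α / (deriv (φ k) t - deriv (φ (k - 1)) t) ≤ a) (k : ℕ)
    (hk₁ : 1 ≤ k) (hk : k ≤ K) : 2 * α / a ≤ deriv (φ k) t - deriv (φ (k - 1)) t := by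
  have hgap : 0 < deriv (φ k) t - deriv (φ (k - 1)) t := by
    rcases hk₁.eq_or_lt with rfl | hk₂
    · obtain ⟨c, hc, hcφ⟩ := hφ'_pos 1 le_rfl hk
      linarith [hcφ t, hφ₀ t]
    · obtain ⟨d, hd, hdφ⟩ := hfreq
      linarith [hdφ k hk₂ hk t]
  exact (div_le_comm₀ hgap ha).1 (hsep k hk₁ hk)

lemma norm_sub_two_mul_le_mul_norm_hatg {x : ℝ → ℂ} {g σ : ℝ → ℝ} {φ : ℕ → ℝ → ℝ}
    {α t ε : ℝ} {l : ℕ} {z : ℂ} {E η₀ : ℝ} (hr : 0 < α / σ t) (hg₀ : hatg g 0 = 1)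
    (hloc : ∀ η, |η - deriv (φ l) t| < α / σ t →
      ‖aSTFT x g σ t η - z * hatg g (σ t * (η - deriv (φ l) t))‖ ≤ E)
    (hmem : η₀ ∈ Gtk x g σ φ α t ε l)
    (hmax : ∀ η ∈ Gtk x g σ φ α t ε l, ‖aSTFT x g σ t η‖ ≤ ‖aSTFT x g σ t η₀‖) :
    ‖z‖ - 2 * E ≤ ‖z‖ * ‖hatg g (σ t * (η₀ - deriv (φ l) t))‖ := by
  have hcenter_mem : |deriv (φ l) t - deriv (φ l) t| < α / σ t := by simpa using hr
  have hcenter := hloc _ hcenter_mem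
  rw [sub_self, mul_zero, hg₀, mul_one] at hcenter
  have hpeak : ‖aSTFT x g σ t (deriv (φ l) t)‖ ≤ ‖aSTFT x g σ t η₀‖ := by
    by_cases h : ε < ‖aSTFT x g σ t (deriv (φ l) t)‖
    · exact hmax _ ⟨h, hcenter_mem⟩
    · exact (not_lt.1 h).trans hmem.1.le
  have hη₀ := hloc η₀ hmem.2
  rw [← norm_mul]
  linarith [norm_sub_norm_le z (aSTFT x g σ t (deriv (φ l) t)),
    norm_sub_rev z (aSTFT x g σ t (deriv (φ l) t)), norm_sub_norm_le (aSTFT x g σ t η₀) (z * hatg g (σ t * (η₀ - deriv (φ l) t)))]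

theorem norm_aSTFT_sub_xcomp_mul_hatg_le {K : ℕ} {A φ : ℕ → ℝ → ℝ} {ε1 ε2 : ℝ} {x : ℝ → ℂ}
    {g σ : ℝ → ℝ} {α t : ℝ} (hε2 : 0 ≤ ε2)
    (hAreg : ∀ k ≤ K, Continuous (A k)) (hAbdd : ∀ k ≤ K, ∃ C, ∀ s, |A k s| ≤ C)
    (hφreg : ∀ k ≤ K, ContDiff ℝ 2 (φ k)) (hφ0 : ∀ s, φ 0 s = 0)
    (hApos : ∀ k ≤ K, 0 ≤ A k t)
    (hφ'pos : ∀ k, 1 ≤ k → k ≤ K → ∃ c > 0, ∀ s, c ≤ deriv (φ k) s)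
    (hfreq : ∃ d > 0, ∀ k, 2 ≤ k → k ≤ K → ∀ s, d ≤ deriv (φ k) s - deriv (φ (k - 1)) s)
    (hAlip : ∀ k ≤ K, ∀ τ, |A k (t + τ) - A k t| ≤ ε1 * |τ| * A k t)
    (hφ'' : ∀ k, 1 ≤ k → k ≤ K → ∀ s, |deriv (deriv (φ k)) s| ≤ ε2)
    (hx : ∀ s, x s = ∑ k ∈ Finset.range (K + 1), xcomp A φ k s)
    (hg : Integrable g) (hg₁ : Integrable fun u ↦ |u| ^ 1 * |g u|)
    (hg₂ : Integrable fun u ↦ |u| ^ 2 * |g u|) (hα : 0 ≤ α)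
    (hsupp : ∀ ξ, α < |ξ| → hatg g ξ = 0) (hσ : 0 < σ t)
    (hsep : ∀ k, 1 ≤ k → k ≤ K → 2 * α / (deriv (φ k) t - deriv (φ (k - 1)) t) ≤ σ t)
    {m : ℕ} (hm : m ≤ K) {η : ℝ} (hη : |η - deriv (φ m) t| < α / σ t) :
    ‖aSTFT x g σ t η - xcomp A φ m t * hatg g (σ t * (η - deriv (φ m) t))‖ ≤
      Msum K A t * lam0 g σ ε1 ε2 t := by
  have hφ₀ : φ 0 = 0 := funext hφ0
  have hφ''_all : ∀ k ≤ K, ∀ s, |deriv (deriv (φ k)) s| ≤ ε2 := fun k hk s ↦ by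
    rcases Nat.eq_zero_or_pos k with rfl | hk₁
    · simpa [hφ₀] using hε2
    · exact hφ'' k hk₁ hk s
  have hgap : ∀ k, 1 ≤ k → k ≤ K → 2 * α / σ t ≤ deriv (φ k) t - deriv (φ (k - 1)) t :=
    two_mul_div_le_deriv_sub_deriv_pred hσ (by simp [hφ₀]) hφ'pos hfreq hsep
  exact norm_sub_mul_hatg_le_of_separated hm
    (norm_aSTFT_sub_sum_le hAreg hAbdd hφreg hApos hAlip hφ''_all hx hg hg₁ hg₂ hσ η) hsupp hσ
    (fun j hj k hk hjk ↦ le_abs_sub_of_le_sub_pred (by positivity) hgap hj hk hjk) hη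

theorem cor2_1c_general (K : ℕ) (A φ : ℕ → ℝ → ℝ) (ε1 ε2 : ℝ) (x : ℝ → ℂ)
    (g : ℝ → ℝ) (σ : ℝ → ℝ) (α t epst : ℝ)
    (hε2 : 0 < ε2)
    (hAreg : ∀ k ≤ K, ContDiff ℝ 1 (A k))
    (hAbdd : ∀ k ≤ K, ∃ C, ∀ s, |A k s| ≤ C)
    (hφreg : ∀ k ≤ K, ContDiff ℝ 2 (φ k))
    (hφ0 : ∀ s, φ 0 s = 0)
    (hApos : ∀ k ≤ K, ∀ s, 0 < A k s)
    (hφ'pos : ∀ k, 1 ≤ k → k ≤ K → ∃ c > 0, ∀ s, c ≤ deriv (φ k) s)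
    (hfreq : ∃ d > 0, ∀ k, 2 ≤ k → k ≤ K → ∀ s, d ≤ deriv (φ k) s - deriv (φ (k - 1)) s)
    (hAlip : ∀ k ≤ K, ∀ s τ, |A k (s + τ) - A k s| ≤ ε1 * |τ| * A k s)
    (hφ'' : ∀ k, 1 ≤ k → k ≤ K → ∀ s, |deriv (deriv (φ k)) s| ≤ ε2)
    (hx : ∀ s, x s = ∑ k ∈ Finset.range (K + 1), xcomp A φ k s)
    (hgint : Integrable g)
    (hgI1 : Integrable fun τ : ℝ => τ * g τ)
    (hgI2 : Integrable fun τ : ℝ => τ ^ 2 * g τ)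
    (hgnorm : (∫ τ : ℝ, g τ) = 1)
    (β : ℝ) (hβ : 0 < β)
    (hgeven : ∀ ξ, ‖hatg g (-ξ)‖ = ‖hatg g ξ‖)
    (hsuppβ : ∀ ξ, β < |ξ| → hatg g ξ = 0)
    (hα : 0 < α)
    (hsuppα : ∀ ξ, α < |ξ| → hatg g ξ = 0)
    (hσ : ∀ s, 0 < σ s)
    (hsep : ∀ s, ∀ k, 1 ≤ k → k ≤ K →
      2 * α / (deriv (φ k) s - deriv (φ (k - 1)) s) ≤ σ s)
    (hmain : 2 * Msum K A t * lam0 g σ ε1 ε2 t ≤ muMin K A t)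
    (ginv : ℝ → ℝ)
    (hginvβ : ∀ ξ, 0 ≤ ξ → ξ ≤ β → ginv ‖hatg g ξ‖ = ξ)
    (ηhat : ℕ → ℝ)
    (hηmem : ∀ l, 1 ≤ l → l ≤ K → ηhat l ∈ Gtk x g σ φ α t epst l)
    (hηmax : ∀ l, 1 ≤ l → l ≤ K → ∀ η ∈ Gtk x g σ φ α t epst l,
      ‖aSTFT x g σ t η‖ ≤ ‖aSTFT x g σ t (ηhat l)‖)
    (hη0 : ηhat 0 = 0)
    :
    ∀ l ≤ K,
      ‖aSTFT x g σ t (ηhat l) - xcomp A φ l t‖ ≤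
        Msum K A t * lam0 g σ ε1 ε2 t +
          2 * π * momentI g 1 * A l t *
            ginv (1 - 2 * Msum K A t * lam0 g σ ε1 ε2 t / A l t) := by
  intro l hl
  rw [mul_assoc 2 (Msum K A t)] at hmain ⊢
  set E := Msum K A t * lam0 g σ ε1 ε2 t
  have hσt := hσ t
  have hr : 0 < α / σ t := div_pos hα hσt
  have hloc : ∀ m ≤ K, ∀ η, |η - deriv (φ m) t| < α / σ t →
      ‖aSTFT x g σ t η - xcomp A φ m t * hatg g (σ t * (η - deriv (φ m) t))‖ ≤ E :=
    fun m hm η ↦ norm_aSTFT_sub_xcomp_mul_hatg_le hε2.le (fun k hk ↦ (hAreg k hk).continuous)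
      hAbdd hφreg hφ0 (fun k hk ↦ (hApos k hk t).le) hφ'pos hfreq (fun k hk ↦ hAlip k hk t) hφ''
      hx hgint (by simpa using hgI1.abs) (by simpa [abs_mul] using hgI2.abs) hα.le hsuppα hσt
      (hsep t) hm
  have hz : ‖xcomp A φ l t‖ = A l t := by rw [norm_xcomp, abs_of_pos (hApos l hl t)]
  obtain ⟨hD, hridge⟩ : |ηhat l - deriv (φ l) t| < α / σ t ∧ ‖xcomp A φ l t‖ - 2 * E ≤
      ‖xcomp A φ l t‖ * ‖hatg g (σ t * (ηhat l - deriv (φ l) t))‖ := by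
    rcases Nat.eq_zero_or_pos l with rfl | hl₁
    · have hd₀ : deriv (φ 0) t = 0 := by simp [show φ 0 = 0 from funext hφ0]
      have hD₀ : |ηhat 0 - deriv (φ 0) t| < α / σ t := by simpa [hη0, hd₀] using hr
      refine ⟨hD₀, ?_⟩
      rw [hη0, hd₀, sub_self, mul_zero, hatg_zero hgnorm, norm_one, mul_one]
      linarith [(norm_nonneg _).trans (hloc 0 hl _ hD₀)]
    · exact ⟨(hηmem l hl₁ hl).2, norm_sub_two_mul_le_mul_norm_hatg hr (hatg_zero hgnorm)
        (hloc l hl) (hηmem l hl₁ hl) (hηmax l hl₁ hl)⟩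
  have hE : 2 * E ≤ ‖xcomp A φ l t‖ :=
    hz ▸ hmain.trans (Finset.inf'_le _ (Finset.mem_range.2 (Nat.lt_succ_of_le hl)))
  simpa only [hz] using norm_sub_le_of_le_mul_norm_hatg hgint hgI1 hgnorm hβ.le hsuppβ hgeven
    hginvβ (hz ▸ hApos l hl t) hE (hloc l hl _ hD) hridge

theorem cor2_1c (K : ℕ) (A φ : ℕ → ℝ → ℝ) (ε1 ε2 : ℝ) (x : ℝ → ℂ)
    (g : ℝ → ℝ) (σ : ℝ → ℝ) (α t epst : ℝ)
    (hε1 : 0 < ε1) (hε2 : 0 < ε2)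
    (hAreg : ∀ k ≤ K, ContDiff ℝ 1 (A k))
    (hAbdd : ∀ k ≤ K, ∃ C, ∀ s, |A k s| ≤ C)
    (hφreg : ∀ k ≤ K, ContDiff ℝ 2 (φ k))
    (hφ0 : ∀ s, φ 0 s = 0)
    (hApos : ∀ k ≤ K, ∀ s, 0 < A k s)
    (hφ'pos : ∀ k, 1 ≤ k → k ≤ K → ∃ c > 0, ∀ s, c ≤ deriv (φ k) s)
    (hφ'bdd : ∀ k, 1 ≤ k → k ≤ K → ∃ C, ∀ s, deriv (φ k) s ≤ C)
    (hfreq : ∃ d > 0, ∀ k, 2 ≤ k → k ≤ K → ∀ s, d ≤ deriv (φ k) s - deriv (φ (k - 1)) s)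
    (hAlip : ∀ k ≤ K, ∀ s τ, |A k (s + τ) - A k s| ≤ ε1 * |τ| * A k s)
    (hφ'' : ∀ k, 1 ≤ k → k ≤ K → ∀ s, |deriv (deriv (φ k)) s| ≤ ε2)
    (hx : ∀ s, x s = ∑ k ∈ Finset.range (K + 1), xcomp A φ k s)
    (hgint : Integrable g)
    (hgL2 : MemLp g 2 (volume : Measure ℝ))
    (hgI1 : Integrable fun τ : ℝ => τ * g τ)
    (hgI2 : Integrable fun τ : ℝ => τ ^ 2 * g τ)
    (hgnorm : (∫ τ : ℝ, g τ) = 1)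
    (β : ℝ) (hβ : 0 < β)
    (hgeven : ∀ ξ, ‖hatg g (-ξ)‖ = ‖hatg g ξ‖)
    (hgdecβ : ∀ ξ1 ξ2, 0 ≤ ξ1 → ξ1 ≤ ξ2 → ξ2 ≤ β → ‖hatg g ξ2‖ ≤ ‖hatg g ξ1‖)
    (hsuppβ : ∀ ξ, β < |ξ| → hatg g ξ = 0)
    (hα : 0 < α)
    (hsuppα : ∀ ξ, α < |ξ| → hatg g ξ = 0)
    (hσ : ∀ s, 0 < σ s)
    (hsep : ∀ s, ∀ k, 1 ≤ k → k ≤ K →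
      2 * α / (deriv (φ k) s - deriv (φ (k - 1)) s) ≤ σ s)
    (hmain : 2 * Msum K A t * lam0 g σ ε1 ε2 t ≤ muMin K A t)
    (heps1 : Msum K A t * lam0 g σ ε1 ε2 t ≤ epst)
    (heps2 : epst ≤ muMin K A t - Msum K A t * lam0 g σ ε1 ε2 t)
    (ginv : ℝ → ℝ)
    (hginvβ : ∀ ξ, 0 ≤ ξ → ξ ≤ β → ginv ‖hatg g ξ‖ = ξ)
    (ηhat : ℕ → ℝ)
    (hηmem : ∀ l, 1 ≤ l → l ≤ K → ηhat l ∈ Gtk x g σ φ α t epst l)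
    (hηmax : ∀ l, 1 ≤ l → l ≤ K → ∀ η ∈ Gtk x g σ φ α t epst l,
      ‖aSTFT x g σ t η‖ ≤ ‖aSTFT x g σ t (ηhat l)‖)
    (hη0 : ηhat 0 = 0)
    :
    ∀ l ≤ K,
      ‖aSTFT x g σ t (ηhat l) - xcomp A φ l t‖ ≤
        Msum K A t * lam0 g σ ε1 ε2 t +
          2 * π * momentI g 1 * A l t *
            ginv (1 - 2 * Msum K A t * lam0 g σ ε1 ε2 t / A l t) :=
  cor2_1c_general K A φ ε1 ε2 x g σ α t epst hε2 hAreg hAbdd hφreg hφ0 hApos hφ'pos hfreq hAlip hφ''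
    hx hgint hgI1 hgI2 hgnorm β hβ hgeven hsuppβ hα hsuppα hσ hsep hmain ginv hginvβ ηhat hηmem
    hηmax hη0
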